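/- Let C > 0, δ = 0.01, and let (xₙ) be reals with partial quadratic sums Aₙ² = Σᵢ₌₁ⁿ xᵢ² → ∞, and suppose ψ is non-decreasing with √(2 ln ln n + 3 ln ln ln n) ≤ ψ(n) ≤ √(2 ln ln n + 4 ln ln ln n) eventually, and |xₙ| ≤ C·Aₙ/ψ(Aₙ²)³ for all sufficiently large n. Then for all sufficiently large n, max₁≤i≤n |xᵢ| < (1+δ)·C·Aₙ/ψ(Aₙ²)³. -/

import Mathlib

/-!
Write `S n = ∑ x_i²` and `g t = √t / ψ t ^ 3`, so that the hypothesis reads `|x n| ≤ C g (S n)`.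
The function `g` is almost nondecreasing: for large `t ≤ T`, `g t < 1.01 g T`. Squaring, this
compares `t ψ(T)⁶` with `T ψ(t)⁶`, where `ψ²` lies between `lilEnvelope 3` and `lilEnvelope 4`.
If `T ≤ t²`, then `lilEnvelope 4 T` exceeds `lilEnvelope 3 t` only by `O(log log log t)`, a
vanishing fraction of it; if `T > t²`, the factor `T / t > √T` beats every power of
`log log T`. Moreover `g T ≥ T ^ (1/4) → ∞`, so the finitely many early terms are eventually
dominated too, and every later term satisfies `|x i| ≤ C g (S i) < 1.01 C g (S n)`.
-/

open Real Filter

noncomputable def lilEnvelope (k t : ℝ) : ℝ := 2 * log (log t) + k * log (log (log t))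

lemma tendsto_log_log_atTop : Tendsto (fun t : ℝ => log (log t)) atTop atTop :=
  tendsto_log_atTop.comp tendsto_log_atTop

lemma tendsto_log_log_log_atTop : Tendsto (fun t : ℝ => log (log (log t))) atTop atTop :=
  tendsto_log_atTop.comp tendsto_log_log_atTop

lemma eventually_log_add_le_mul (c : ℝ) {ε : ℝ} (hε : 0 < ε) :
    ∀ᶠ L in atTop, log L + c ≤ ε * L := by
  filter_upwards [isLittleO_log_id_atTop.def (half_pos hε), eventually_ge_atTop (2 * c / ε),
    eventually_ge_atTop 0] with L hlog hc hL
  rw [Real.norm_eq_abs, Real.norm_eq_abs, id, abs_of_nonneg hL] at hlog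
  rw [div_le_iff₀' hε] at hc
  linarith [le_abs_self (log L)]

lemma lilEnvelope_le_lilEnvelope {k s T : ℝ} (hk : 0 ≤ k) (hs : exp 1 < s) (hsT : s ≤ T) :
    lilEnvelope k s ≤ lilEnvelope k T := by
  have hs₀ : 0 < s := (exp_pos 1).trans hs
  have hlog : 1 < log s := (lt_log_iff_exp_lt hs₀).2 hs
  have h₁ : log s ≤ log T := log_le_log hs₀ hsT
  have h₂ : log (log s) ≤ log (log T) := log_le_log (by linarith) h₁
  have h₃ : log (log (log s)) ≤ log (log (log T)) := log_le_log (log_pos hlog) h₂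
  have := mul_le_mul_of_nonneg_left h₃ hk
  unfold lilEnvelope
  linarith

lemma lilEnvelope_sq_le {t : ℝ} (ht : 1 < t) (hlog : log 2 ≤ log (log t)) :
    lilEnvelope 4 (t ^ 2) ≤ lilEnvelope 3 t + log (log (log t)) + 6 * log 2 := by
  have hlog2 : 0 < log 2 := log_pos one_lt_two
  have hlogt : 0 < log t := log_pos ht
  have hloglog : 0 < log (log t) := hlog2.trans_le hlog
  have h₁ : log (log (t ^ 2)) = log 2 + log (log t) := by
    rw [log_pow, Nat.cast_ofNat, log_mul two_ne_zero hlogt.ne']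
  have h₂ : log (log 2 + log (log t)) ≤ log 2 + log (log (log t)) := by
    rw [← log_mul two_ne_zero hloglog.ne']
    exact log_le_log (by positivity) (by linarith)
  unfold lilEnvelope
  rw [h₁]
  linarith

lemma eventually_lilEnvelope_pow_three_le_sqrt : ∀ᶠ t in atTop, lilEnvelope 4 t ^ 3 ≤ √t := by
  have hcube : ∀ᶠ s in atTop, 1728 * log s ^ 3 ≤ s := by
    filter_upwards [isLittleO_pow_log_id_atTop.def (by norm_num : (0 : ℝ) < 1 / 1728),
      eventually_ge_atTop 0, tendsto_log_atTop.eventually_ge_atTop 0] with s hs hs₀ hlog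
    rw [Real.norm_eq_abs, Real.norm_eq_abs, id, abs_of_nonneg hs₀,
      abs_of_nonneg (pow_nonneg hlog 3)] at hs
    linarith
  filter_upwards [tendsto_sqrt_atTop.eventually hcube, eventually_ge_atTop 0,
    tendsto_log_atTop.eventually_ge_atTop 0, tendsto_log_log_atTop.eventually_ge_atTop 0,
    tendsto_log_log_log_atTop.eventually_ge_atTop 0] with t hcube ht hl hll hlll
  have hle : lilEnvelope 4 t ≤ 6 * log t := by
    unfold lilEnvelope
    linarith [log_le_self hl, log_le_self hll]
  calc lilEnvelope 4 t ^ 3 ≤ (6 * log t) ^ 3 :=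
        pow_le_pow_left₀ (by unfold lilEnvelope; positivity) hle 3
    _ = 1728 * log √t ^ 3 := by rw [log_sqrt ht]; ring
    _ ≤ √t := hcube

lemma eventually_one_le_lilEnvelope {k : ℝ} (hk : 0 ≤ k) : ∀ᶠ t in atTop, 1 ≤ lilEnvelope k t := by
  filter_upwards [tendsto_log_log_atTop.eventually_ge_atTop 1,
    tendsto_log_log_log_atTop.eventually_ge_atTop 0] with t hll hlll
  unfold lilEnvelope
  nlinarith

lemma eventually_log_log_log_add_le :
    ∀ᶠ t in atTop, log (log (log t)) + 6 * log 2 ≤ 0.005 * lilEnvelope 3 t := by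
  filter_upwards [tendsto_log_log_atTop.eventually
      (eventually_log_add_le_mul (6 * log 2) (by norm_num : (0 : ℝ) < 0.01)),
    tendsto_log_log_log_atTop.eventually_ge_atTop 0] with t h hlll
  unfold lilEnvelope
  linarith

lemma exists_mul_lilEnvelope_pow_three_le : ∃ M, ∀ t T, M ≤ t → t ≤ T →
    t * lilEnvelope 4 T ^ 3 ≤ 1.005 ^ 3 * (T * lilEnvelope 3 t ^ 3) := by
  obtain ⟨M, hM⟩ := eventually_atTop.1 <| eventually_lilEnvelope_pow_three_le_sqrt.and <|
    eventually_log_log_log_add_le.and <| (eventually_gt_atTop (exp 1)).and <|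
    (eventually_one_le_lilEnvelope (by norm_num : (0 : ℝ) ≤ 3)).and <|
    (eventually_one_le_lilEnvelope (by norm_num : (0 : ℝ) ≤ 4)).and <|
    tendsto_log_log_atTop.eventually_ge_atTop (log 2)
  refine ⟨M, fun t T htM htT => ?_⟩
  obtain ⟨-, hlll, hte, he₃, -, hlog2⟩ := hM t htM
  obtain ⟨hsqrt, -, hTe, -, he₄, -⟩ := hM T (htM.trans htT)
  have ht₁ : 1 < t := (one_lt_exp_iff.2 one_pos).trans hte
  rcases le_or_gt T (t ^ 2) with hT | hT
  · have h : lilEnvelope 4 T ≤ 1.005 * lilEnvelope 3 t :=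
      calc lilEnvelope 4 T ≤ lilEnvelope 4 (t ^ 2) :=
            lilEnvelope_le_lilEnvelope (by norm_num) hTe hT
        _ ≤ lilEnvelope 3 t + log (log (log t)) + 6 * log 2 := lilEnvelope_sq_le ht₁ hlog2
        _ ≤ 1.005 * lilEnvelope 3 t := by linarith
    calc t * lilEnvelope 4 T ^ 3 ≤ T * (1.005 * lilEnvelope 3 t) ^ 3 :=
          mul_le_mul htT (pow_le_pow_left₀ (by linarith) h 3) (by positivity) (by linarith)
      _ = 1.005 ^ 3 * (T * lilEnvelope 3 t ^ 3) := by ring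
  · have ht : t ≤ √T := (le_sqrt (by linarith) (by linarith)).2 hT.le
    calc t * lilEnvelope 4 T ^ 3 ≤ √T * √T := mul_le_mul ht hsqrt (by positivity) (sqrt_nonneg _)
      _ = T := mul_self_sqrt (by linarith)
      _ ≤ 1.005 ^ 3 * (T * lilEnvelope 3 t ^ 3) := by
        have := one_le_pow₀ (n := 3) he₃
        nlinarith

section Envelope

variable {ψ : ℝ → ℝ}

lemma eventually_sq_bounds_of_sqrt_bounds
    (hψ : ∀ᶠ t in atTop, √(lilEnvelope 3 t) ≤ ψ t ∧ ψ t ≤ √(lilEnvelope 4 t)) :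
    ∀ᶠ t in atTop, 0 < ψ t ∧ lilEnvelope 3 t ≤ ψ t ^ 2 ∧ ψ t ^ 2 ≤ lilEnvelope 4 t := by
  filter_upwards [hψ, eventually_one_le_lilEnvelope (by norm_num : (0 : ℝ) ≤ 3),
    eventually_one_le_lilEnvelope (by norm_num : (0 : ℝ) ≤ 4)] with t ⟨hlow, hup⟩ he₃ he₄
  have hψ₀ : 0 < ψ t := (sqrt_pos.2 (by linarith)).trans_le hlow
  exact ⟨hψ₀, (sqrt_le_left hψ₀.le).1 hlow, (le_sqrt hψ₀.le (by linarith)).1 hup⟩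

lemma exists_sqrt_div_pow_three_lt
    (hψ : ∀ᶠ t in atTop, 0 < ψ t ∧ lilEnvelope 3 t ≤ ψ t ^ 2 ∧ ψ t ^ 2 ≤ lilEnvelope 4 t) :
    ∃ M, ∀ t T, M ≤ t → t ≤ T → √t / ψ t ^ 3 < (1 + 0.01) * (√T / ψ T ^ 3) := by
  obtain ⟨M₁, hM₁⟩ := eventually_atTop.1 <| hψ.and <| (eventually_gt_atTop 0).and <|
    eventually_one_le_lilEnvelope (by norm_num : (0 : ℝ) ≤ 3)
  obtain ⟨M₂, hM₂⟩ := exists_mul_lilEnvelope_pow_three_le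
  refine ⟨max M₁ M₂, fun t T htM htT => ?_⟩
  obtain ⟨⟨hψt, hlow, -⟩, ht₀, he₃⟩ := hM₁ t (le_of_max_le_left htM)
  obtain ⟨⟨hψT, -, hup⟩, hT₀, -⟩ := hM₁ T ((le_of_max_le_left htM).trans htT)
  have key : t * (ψ T ^ 2) ^ 3 < (1 + 0.01) ^ 2 * (T * (ψ t ^ 2) ^ 3) :=
    calc t * (ψ T ^ 2) ^ 3 ≤ t * lilEnvelope 4 T ^ 3 := by gcongr
      _ ≤ 1.005 ^ 3 * (T * lilEnvelope 3 t ^ 3) := hM₂ t T (le_of_max_le_right htM) htT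
      _ ≤ 1.005 ^ 3 * (T * (ψ t ^ 2) ^ 3) := by gcongr
      _ < (1 + 0.01) ^ 2 * (T * (ψ t ^ 2) ^ 3) := by gcongr; norm_num
  have hsq : ∀ s, 0 ≤ s → (√s / ψ s ^ 3) ^ 2 = s / (ψ s ^ 2) ^ 3 := fun s hs => by
    rw [div_pow, sq_sqrt hs, ← pow_mul, ← pow_mul]
  refine lt_of_pow_lt_pow_left₀ 2 (by positivity) ?_
  rw [mul_pow, hsq t ht₀.le, hsq T hT₀.le, div_lt_iff₀ (by positivity)]
  calc t = t * (ψ T ^ 2) ^ 3 / (ψ T ^ 2) ^ 3 := by field_simp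
    _ < (1 + 0.01) ^ 2 * (T * (ψ t ^ 2) ^ 3) / (ψ T ^ 2) ^ 3 := by gcongr
    _ = (1 + 0.01) ^ 2 * (T / (ψ T ^ 2) ^ 3) * (ψ t ^ 2) ^ 3 := by ring

lemma tendsto_sqrt_div_pow_three_atTop
    (hψ : ∀ᶠ t in atTop, 0 < ψ t ∧ ψ t ^ 2 ≤ lilEnvelope 4 t) :
    Tendsto (fun t => √t / ψ t ^ 3) atTop atTop := by
  refine tendsto_atTop_mono' atTop ?_ (tendsto_sqrt_atTop.comp tendsto_sqrt_atTop)
  filter_upwards [hψ, eventually_lilEnvelope_pow_three_le_sqrt] with t ⟨hψ₀, hup⟩ hsqrt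
  have h : ψ t ^ 3 ≤ √√t := by
    refine (le_sqrt (by positivity) (sqrt_nonneg _)).2 ?_
    calc (ψ t ^ 3) ^ 2 = (ψ t ^ 2) ^ 3 := by ring
      _ ≤ lilEnvelope 4 t ^ 3 := pow_le_pow_left₀ (by positivity) hup 3
      _ ≤ √t := hsqrt
  rw [Function.comp_apply, le_div_iff₀ (by positivity)]
  calc √√t * ψ t ^ 3 ≤ √√t * √√t := by gcongr
    _ = √t := mul_self_sqrt (sqrt_nonneg _)

end Envelope

lemma eventually_forall_le_lt_mul {a b : ℕ → ℝ} {c : ℝ} (hc : 0 < c)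
    (hab : ∀ᶠ n in atTop, a n ≤ b n) (hb : Tendsto b atTop atTop)
    (hb_mono : ∀ᶠ i in atTop, ∀ n ≥ i, b i < c * b n) :
    ∀ᶠ n in atTop, ∀ i ≤ n, a i < c * b n := by
  obtain ⟨N, hN⟩ := eventually_atTop.1 (hab.and hb_mono)
  obtain ⟨B, hB⟩ := ((Set.finite_Iio N).image a).bddAbove
  filter_upwards [(hb.const_mul_atTop hc).eventually_gt_atTop B] with n hBn i hin
  rcases lt_or_ge i N with hi | hi
  · exact (hB ⟨i, hi, rfl⟩).trans_lt hBn
  · exact (hN i hi).1.trans_lt ((hN i hi).2 n hin)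

theorem running_max_bound_general (C : ℝ) (hC : 0 < C) (x : ℕ → ℝ) (ψ : ℝ → ℝ)
    (hA : Filter.Tendsto (fun n : ℕ => ∑ i ∈ Finset.Icc 1 n, x i ^ 2)
      Filter.atTop Filter.atTop)
    (hψ : ∃ N : ℝ, ∀ t ≥ N,
      Real.sqrt (2 * Real.log (Real.log t) + 3 * Real.log (Real.log (Real.log t))) ≤ ψ t ∧
      ψ t ≤ Real.sqrt (2 * Real.log (Real.log t) + 4 * Real.log (Real.log (Real.log t))))
    (hx : ∃ N : ℕ, ∀ n ≥ N,
      |x n| ≤ C * Real.sqrt (∑ i ∈ Finset.Icc 1 n, x i ^ 2) /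
        ψ (∑ i ∈ Finset.Icc 1 n, x i ^ 2) ^ 3) :
    ∃ N : ℕ, ∀ n ≥ N, ∀ i ∈ Finset.Icc 1 n,
      |x i| < (1 + 0.01) * C * Real.sqrt (∑ j ∈ Finset.Icc 1 n, x j ^ 2) /
        ψ (∑ j ∈ Finset.Icc 1 n, x j ^ 2) ^ 3 := by
  set S : ℕ → ℝ := fun n => ∑ i ∈ Finset.Icc 1 n, x i ^ 2
  have hS : Monotone S := fun m n hmn =>
    Finset.sum_le_sum_of_subset_of_nonneg (Finset.Icc_subset_Icc_right hmn)
      fun i _ _ => sq_nonneg (x i)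
  have hψ' := eventually_sq_bounds_of_sqrt_bounds (eventually_atTop.2 hψ)
  obtain ⟨M, hM⟩ := exists_sqrt_div_pow_three_lt hψ'
  have hg := tendsto_sqrt_div_pow_three_atTop (hψ'.mono fun t h => ⟨h.1, h.2.2⟩)
  have hb : Tendsto (fun n => C * (√(S n) / ψ (S n) ^ 3)) atTop atTop :=
    (hg.comp hA).const_mul_atTop hC
  have hb_mono : ∀ᶠ i in atTop, ∀ n ≥ i,
      C * (√(S i) / ψ (S i) ^ 3) < (1 + 0.01) * (C * (√(S n) / ψ (S n) ^ 3)) := by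
    filter_upwards [hA.eventually_ge_atTop M] with i hi n hin
    exact (mul_lt_mul_of_pos_left (hM (S i) (S n) hi (hS hin)) hC).trans_eq (by ring)
  obtain ⟨N, hN⟩ := eventually_atTop.1 <| eventually_forall_le_lt_mul (by norm_num)
    (by simpa only [mul_div_assoc] using eventually_atTop.2 hx) hb hb_mono
  refine ⟨N, fun n hn i hi => ?_⟩
  simpa only [mul_div_assoc, mul_assoc] using hN n hn i (Finset.mem_Icc.1 hi).2

theorem running_max_bound (C : ℝ) (hC : 0 < C) (x : ℕ → ℝ) (ψ : ℝ → ℝ)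
    (hmono : Monotone ψ)
    (hA : Filter.Tendsto (fun n : ℕ => ∑ i ∈ Finset.Icc 1 n, x i ^ 2)
      Filter.atTop Filter.atTop)
    (hψ : ∃ N : ℝ, ∀ t ≥ N,
      Real.sqrt (2 * Real.log (Real.log t) + 3 * Real.log (Real.log (Real.log t))) ≤ ψ t ∧
      ψ t ≤ Real.sqrt (2 * Real.log (Real.log t) + 4 * Real.log (Real.log (Real.log t))))
    (hx : ∃ N : ℕ, ∀ n ≥ N,
      |x n| ≤ C * Real.sqrt (∑ i ∈ Finset.Icc 1 n, x i ^ 2) /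
        ψ (∑ i ∈ Finset.Icc 1 n, x i ^ 2) ^ 3) :
    ∃ N : ℕ, ∀ n ≥ N, ∀ i ∈ Finset.Icc 1 n,
      |x i| < (1 + 0.01) * C * Real.sqrt (∑ j ∈ Finset.Icc 1 n, x j ^ 2) /
        ψ (∑ j ∈ Finset.Icc 1 n, x j ^ 2) ^ 3 :=
  running_max_bound_general C hC x ψ hA hψ hx
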